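/- arXiv:2211.15109 — 5 statements merged into one kernel-verified Lean document; each statement's English description precedes it below -/
import Mathlib

section
/- Let 𝔓 be a Lie algebra of polynomial vector fields on ℝ^n containing all constant fields and the Euler field E, and let f be an element of the centroid C(𝔓), i.e., an endomorphism with f[X,Y] = [fX,Y] = [X,fY] for all X,Y ∈ 𝔓. Then f is homogeneous of degree 0: for every Y ∈ 𝔓_m (m ≥ −1), f(Y) ∈ 𝔓_m. Moreover, writing E'_0 = f(E), one has f(Y) = (1/m)[E'_0, Y] for all Y ∈ 𝔓_m with m ≠ 0, and [E'_0, Y] = 0 for all Y ∈ 𝔓_0. -/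
open MvPolynomial

/-- Polynomial vector fields on ℝⁿ, given by their polynomial components. -/
abbrev PVF (n : ℕ) : Type := Fin n → MvPolynomial (Fin n) ℝ

/-- The Lie bracket of polynomial vector fields:
`[X,Y]^j = Σ_i (X^i ∂(Y^j)/∂x^i − Y^i ∂(X^j)/∂x^i)`. -/
noncomputable def vbracket {n : ℕ} (X Y : PVF n) : PVF n :=
  fun j => ∑ i : Fin n, (X i * pderiv i (Y j) - Y i * pderiv i (X j))

/-- The Euler vector field `E = Σ_i x^i ∂/∂x^i`. -/
noncomputable def eulerVF (n : ℕ) : PVF n := fun j => MvPolynomial.X j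

/-- The constant vector field `∂/∂x^i`. -/
noncomputable def constVF {n : ℕ} (i : Fin n) : PVF n := fun j => if j = i then 1 else 0

/-- A polynomial vector field is homogeneous of degree `i` (an element of `𝔥_i`)
if all its components are homogeneous polynomials of degree `i+1` (the zero field
is homogeneous of every degree). -/
def IsHomog {n : ℕ} (i : ℤ) (X : PVF n) : Prop :=
  (∃ d : ℕ, (d : ℤ) = i + 1 ∧ ∀ k, (X k).IsHomogeneous d) ∨ X = 0

/-! Homogeneous fields of degree `m ≥ -1` are exactly the eigenvectors of `ad E` for the eigenvalue
`m`: this is Euler's identity for the components together with its converse over `ℝ`. Applying the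
centroid identities to `[E, Y] = m Y` gives `m f(Y) = [f E, Y] = [E, f Y]`, so `f(Y)` is again an
eigenvector for `m`, and `f(Y) = m⁻¹ [f E, Y]` when `m ≠ 0`. -/

namespace MvPolynomial
variable {R σ : Type*} [CommRing R]

theorem coeff_X_mul_pderiv (i : σ) (p : MvPolynomial σ R) (s : σ →₀ ℕ) :
    coeff s (X i * pderiv i p) = s i • coeff s p := by
  classical
  rw [coeff_X_mul', coeff_pderiv]
  split_ifs with h
  · rw [Finsupp.mem_support_iff] at h
    rw [tsub_add_cancel_of_le (Finsupp.single_le_iff.2 (Nat.one_le_iff_ne_zero.2 h)),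
      Finsupp.tsub_apply, Finsupp.single_eq_same, Nat.cast_sub (Nat.one_le_iff_ne_zero.2 h)]
    simp [nsmul_eq_mul, mul_comm]
  · simp [Finsupp.notMem_support_iff.1 h]

theorem coeff_sum_X_mul_pderiv [Fintype σ] (p : MvPolynomial σ R) (s : σ →₀ ℕ) :
    coeff s (∑ i : σ, X i * pderiv i p) = s.degree • coeff s p := by
  simp only [coeff_sum, coeff_X_mul_pderiv, ← Finset.sum_smul, Finsupp.degree_eq_sum]

theorem isHomogeneous_iff_sum_X_mul_pderiv [Fintype σ] [IsAddTorsionFree R]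
    {p : MvPolynomial σ R} {n : ℕ} :
    p.IsHomogeneous n ↔ ∑ i : σ, X i * pderiv i p = n • p := by
  refine ⟨IsHomogeneous.sum_X_mul_pderiv, fun h s hs => ?_⟩
  have hcoeff := congrArg (coeff s) h
  rw [coeff_sum_X_mul_pderiv, coeff_smul] at hcoeff
  rw [Pi.one_def, ← Finsupp.degree_eq_weight_one]
  have hz : (s.degree : ℤ) • coeff s p = (n : ℤ) • coeff s p := by
    simpa only [natCast_zsmul] using hcoeff
  exact_mod_cast smul_left_injective ℤ hs hz

end MvPolynomial

section EulerField

variable {n : ℕ}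

theorem vbracket_eulerVF_apply (Z : PVF n) (j : Fin n) :
    vbracket (eulerVF n) Z j = ∑ i : Fin n, X i * pderiv i (Z j) - Z j := by
  simp [vbracket, eulerVF, pderiv_X, Pi.single_apply]

theorem isHomog_iff_forall_isHomogeneous {m : ℤ} {d : ℕ} (hd : (d : ℤ) = m + 1) {Y : PVF n} :
    IsHomog m Y ↔ ∀ k, (Y k).IsHomogeneous d := by
  refine ⟨?_, fun h => Or.inl ⟨d, hd, h⟩⟩
  rintro (⟨d', hd', h⟩ | rfl)
  · obtain rfl : d' = d := by omega
    exact h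
  · exact fun _ => isHomogeneous_zero _ _ _

theorem isHomog_iff_vbracket_eulerVF_eq_smul {m : ℤ} (hm : -1 ≤ m) {Y : PVF n} :
    IsHomog m Y ↔ vbracket (eulerVF n) Y = (m : ℝ) • Y := by
  obtain ⟨d, hd⟩ : ∃ d : ℕ, (d : ℤ) = m + 1 := ⟨(m + 1).toNat, by omega⟩
  have hdR : (d : ℝ) = m + 1 := by exact_mod_cast hd
  rw [isHomog_iff_forall_isHomogeneous hd, funext_iff]
  refine forall_congr' fun k => ?_
  rw [isHomogeneous_iff_sum_X_mul_pderiv, vbracket_eulerVF_apply, Pi.smul_apply, sub_eq_iff_eq_add,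
    ← Nat.cast_smul_eq_nsmul ℝ, hdR, add_smul, one_smul]

end EulerField

theorem centroid_homogeneous_degree_zero_general (n : ℕ) (P : Submodule ℝ (PVF n))
    (hE : eulerVF n ∈ P)
    (f : PVF n →ₗ[ℝ] PVF n)
    (hcent : ∀ X ∈ P, ∀ Y ∈ P,
      f (vbracket X Y) = vbracket (f X) Y ∧ f (vbracket X Y) = vbracket X (f Y)) :
    ∀ m : ℤ, -1 ≤ m → ∀ Y ∈ P, IsHomog m Y →
      IsHomog m (f Y) ∧
      (m ≠ 0 → f Y = (m : ℝ)⁻¹ • vbracket (f (eulerVF n)) Y) ∧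
      (m = 0 → vbracket (f (eulerVF n)) Y = 0) := by
  intro m hm Y hY hYm
  obtain ⟨hleft, hright⟩ := hcent (eulerVF n) hE Y hY
  rw [(isHomog_iff_vbracket_eulerVF_eq_smul hm).1 hYm, map_smul] at hleft hright
  refine ⟨(isHomog_iff_vbracket_eulerVF_eq_smul hm).2 hright.symm, fun hm0 => ?_, fun hm0 => ?_⟩
  · rw [← hleft, smul_smul, inv_mul_cancel₀ (Int.cast_ne_zero.2 hm0), one_smul]
  · rw [← hleft, hm0, Int.cast_zero, zero_smul]

theorem centroid_homogeneous_degree_zero (n : ℕ) (P : Submodule ℝ (PVF n))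
    (hE : eulerVF n ∈ P)
    (hconst : ∀ i : Fin n, constVF i ∈ P)
    (hbr : ∀ X ∈ P, ∀ Y ∈ P, vbracket X Y ∈ P)
    (f : PVF n →ₗ[ℝ] PVF n) (hfP : ∀ X ∈ P, f X ∈ P)
    (hcent : ∀ X ∈ P, ∀ Y ∈ P,
      f (vbracket X Y) = vbracket (f X) Y ∧ f (vbracket X Y) = vbracket X (f Y)) :
    ∀ m : ℤ, -1 ≤ m → ∀ Y ∈ P, IsHomog m Y →
      IsHomog m (f Y) ∧
      (m ≠ 0 → f Y = (m : ℝ)⁻¹ • vbracket (f (eulerVF n)) Y) ∧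
      (m = 0 → vbracket (f (eulerVF n)) Y = 0) :=
  centroid_homogeneous_degree_zero_general n P hE f hcent
end

section
/- Let 𝔓 be a Lie algebra of polynomial vector fields on ℝ^n containing all constant fields and the Euler field E, and suppose f ∈ C(𝔓) satisfies f(E) = cE for some c ∈ ℝ. Then f = c·Id. -/
open MvPolynomial

lemma vbr_const {n : ℕ} (i : Fin n) (Z : PVF n) :
    vbracket (constVF i) Z = fun j => pderiv i (Z j) := by
  funext j
  have hz : ∀ x : Fin n, (pderiv x) (if j = i then (1 : MvPolynomial (Fin n) ℝ) else 0) = 0 := by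
    intro x; split <;> simp
  simp [vbracket, constVF, ite_mul, hz, Finset.sum_ite_eq']

lemma vbr_smul_left {n : ℕ} (c : ℝ) (X Z : PVF n) :
    vbracket (c • X) Z = c • vbracket X Z := by
  funext j
  simp [vbracket, Finset.smul_sum, smul_sub, smul_mul_assoc, mul_smul_comm, map_smul]

lemma vbr_smul_right {n : ℕ} (c : ℝ) (X Z : PVF n) :
    vbracket X (c • Z) = c • vbracket X Z := by
  funext j
  simp [vbracket, Finset.smul_sum, smul_sub, smul_mul_assoc, mul_smul_comm, map_smul]

lemma vbr_eul {n : ℕ} (Z : PVF n) :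
    vbracket Z (eulerVF n) = fun j => Z j - ∑ k, MvPolynomial.X k * pderiv k (Z j) := by
  funext j
  simp [vbracket, eulerVF, pderiv_X, Pi.single_apply, Finset.sum_sub_distrib, mul_ite,
    Finset.sum_ite_eq, eq_comm]

theorem centroid_scalar_of_fE_eq_smul_euler (n : ℕ) (P : Submodule ℝ (PVF n))
    (hE : eulerVF n ∈ P)
    (hconst : ∀ i : Fin n, constVF i ∈ P)
    (hbr : ∀ X ∈ P, ∀ Y ∈ P, vbracket X Y ∈ P)
    (f : PVF n →ₗ[ℝ] PVF n) (hfP : ∀ X ∈ P, f X ∈ P)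
    (hcent : ∀ X ∈ P, ∀ Y ∈ P,
      f (vbracket X Y) = vbracket (f X) Y ∧ f (vbracket X Y) = vbracket X (f Y))
    (c : ℝ) (hfE : f (eulerVF n) = c • eulerVF n) :
    ∀ X ∈ P, f X = c • X := by
  -- f on constant fields
  have hfC : ∀ i : Fin n, f (constVF i) = c • constVF i := by
    intro i
    have h := hcent (constVF i) (hconst i) (eulerVF n) hE
    have hbE : vbracket (constVF i) (eulerVF n) = constVF i := by
      rw [vbr_const]
      funext j
      simp [eulerVF, constVF, pderiv_X, Pi.single_apply, eq_comm]
    rw [hbE] at h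
    rw [h.2, hfE, vbr_smul_right, hbE]
  intro X hX
  -- partials of f X
  have hpd : ∀ i j, pderiv i ((f X) j) = c • pderiv i (X j) := by
    intro i j
    have h := hcent (constVF i) (hconst i) X hX
    have h2 : vbracket (constVF i) (f X) = c • vbracket (constVF i) X := by
      rw [← h.2, h.1, hfC, vbr_smul_left]
    have := congrFun h2 j
    rw [vbr_const, vbr_const] at this
    simpa using this
  -- bracket with Euler field
  have h := hcent X hX (eulerVF n) hE
  have h2 : vbracket (f X) (eulerVF n) = c • vbracket X (eulerVF n) := by
    rw [← h.1, h.2, hfE, vbr_smul_right]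
  funext j
  have h3 := congrFun h2 j
  rw [vbr_eul, vbr_eul] at h3
  simp only [Pi.smul_apply, smul_sub, Finset.smul_sum] at h3
  have : ∑ k, MvPolynomial.X k * pderiv k ((f X) j)
      = ∑ k, c • (MvPolynomial.X (R := ℝ) k * pderiv k (X j)) := by
    refine Finset.sum_congr rfl fun k _ => ?_
    rw [hpd, mul_smul_comm]
  rw [this] at h3
  simpa using sub_left_inj.mp h3
end

section
/- For any Lie algebra L, every generalized derivation decomposes as the sum of a quasiderivation and an element of the quasicentroid: GenDer(L) = QDer(L) + QC(L). Concretely, if (f,h,g) satisfies [f(X),Y] + [X,h(Y)] = g[X,Y] for all X,Y, then (f+h)/2 is a quasiderivation with associated map g, and (f−h)/2 belongs to QC(L). -/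
theorem genDer_eq_qDer_add_qc (K L : Type*) [Field K] [LieRing L] [LieAlgebra K L]
    (h2 : (2 : K) ≠ 0) :
    (∀ f h g : Module.End K L,
      (∀ X Y : L, ⁅f X, Y⁆ + ⁅X, h Y⁆ = g ⁅X, Y⁆) →
        (∀ X Y : L, ⁅((2 : K)⁻¹ • (f + h)) X, Y⁆ + ⁅X, ((2 : K)⁻¹ • (f + h)) Y⁆ = g ⁅X, Y⁆) ∧
        (∀ X Y : L, ⁅((2 : K)⁻¹ • (f - h)) X, Y⁆ = ⁅X, ((2 : K)⁻¹ • (f - h)) Y⁆)) ∧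
    ({f : Module.End K L | ∃ h g : Module.End K L,
        ∀ X Y : L, ⁅f X, Y⁆ + ⁅X, h Y⁆ = g ⁅X, Y⁆} =
      {f : Module.End K L | ∃ q c : Module.End K L,
        (∃ g : Module.End K L, ∀ X Y : L, ⁅q X, Y⁆ + ⁅X, q Y⁆ = g ⁅X, Y⁆) ∧
        (∀ X Y : L, ⁅c X, Y⁆ = ⁅X, c Y⁆) ∧ f = q + c}) := by
  have key : ∀ f h g : Module.End K L,
      (∀ X Y : L, ⁅f X, Y⁆ + ⁅X, h Y⁆ = g ⁅X, Y⁆) →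
        (∀ X Y : L, ⁅((2 : K)⁻¹ • (f + h)) X, Y⁆ + ⁅X, ((2 : K)⁻¹ • (f + h)) Y⁆ = g ⁅X, Y⁆) ∧
        (∀ X Y : L, ⁅((2 : K)⁻¹ • (f - h)) X, Y⁆ = ⁅X, ((2 : K)⁻¹ • (f - h)) Y⁆) := by
    intro f h g hfg
    have swap : ∀ X Y : L, ⁅h X, Y⁆ + ⁅X, f Y⁆ = g ⁅X, Y⁆ := by
      intro X Y
      have h1 := hfg Y X
      rw [← lie_skew (f Y) X, ← lie_skew Y (h X), ← lie_skew Y X, map_neg,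
        ← neg_add, neg_inj] at h1
      rw [add_comm]
      exact h1
    constructor
    · intro X Y
      rw [LinearMap.smul_apply, LinearMap.smul_apply, smul_lie, lie_smul, ← smul_add]
      have hA : ⁅(f + h) X, Y⁆ + ⁅X, (f + h) Y⁆ = (2 : K) • g ⁅X, Y⁆ := by
        simp only [LinearMap.add_apply, add_lie, lie_add, two_smul]
        nth_rewrite 1 [← hfg X Y]
        rw [← swap X Y]
        abel
      rw [hA, smul_smul, inv_mul_cancel₀ h2, one_smul]
    · intro X Y
      rw [LinearMap.smul_apply, LinearMap.smul_apply, smul_lie, lie_smul]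
      congr 1
      simp only [LinearMap.sub_apply]
      rw [sub_lie, lie_sub, sub_eq_sub_iff_add_eq_add, add_comm ⁅X, f Y⁆]
      exact (hfg X Y).trans (swap X Y).symm
  refine ⟨key, ?_⟩
  ext f
  constructor
  · rintro ⟨h, g, hfg⟩
    obtain ⟨hq, hc⟩ := key f h g hfg
    refine ⟨(2 : K)⁻¹ • (f + h), (2 : K)⁻¹ • (f - h), ⟨g, hq⟩, hc, ?_⟩
    have : (f + h) + (f - h) = (2 : K) • f := by rw [two_smul]; abel
    rw [← smul_add, this, smul_smul, inv_mul_cancel₀ h2, one_smul]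
  · rintro ⟨q, c, ⟨g, hg⟩, hc, rfl⟩
    refine ⟨q - c, g, fun X Y => ?_⟩
    simp only [LinearMap.add_apply, LinearMap.sub_apply, add_lie, lie_sub]
    rw [hc X Y, ← hg X Y]
    abel
end

section
/- In ℝ² with coordinates (x,y), let 𝔓 be the 4-dimensional Lie algebra spanned by ∂/∂x, ∂/∂y, x∂/∂x, y∂/∂y. The linear map f'' defined by f''(∂/∂x) = x∂/∂x, f''(∂/∂y) = y∂/∂y, and f''(x∂/∂x) = f''(y∂/∂y) = 0 is a quasiderivation of 𝔓 (with associated map g = 0, i.e., [f''(X),Y] + [X,f''(Y)] = 0 for all X,Y ∈ 𝔓), but f'' is neither a derivation of 𝔓 nor an element of the quasicentroid QC(𝔓). -/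
open MvPolynomial

/-- The vector field x∂/∂x on ℝ². -/
noncomputable def xddx : PVF 2 := fun j => if j = 0 then MvPolynomial.X 0 else 0

/-- The vector field y∂/∂y on ℝ². -/
noncomputable def yddy : PVF 2 := fun j => if j = 1 then MvPolynomial.X 1 else 0

/-- The span of ∂/∂x, ∂/∂y, x∂/∂x, y∂/∂y on ℝ². -/
noncomputable def Pex : Submodule ℝ (PVF 2) :=
  Submodule.span ℝ {constVF 0, constVF 1, xddx, yddy}

/-- The example quasiderivation: extract constant coefficients. -/
noncomputable def fmap : PVF 2 →ₗ[ℝ] PVF 2 where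
  toFun X := constantCoeff (X 0) • xddx + constantCoeff (X 1) • yddy
  map_add' X Y := by
    simp only [Pi.add_apply, map_add, add_smul]
    abel
  map_smul' c X := by
    simp only [Pi.smul_apply, smul_eq_C_mul, map_mul, constantCoeff_C, RingHom.id_apply,
      smul_add, smul_smul, mul_comm]

lemma fmap_e0 : fmap (constVF 0) = xddx := by
  simp [fmap, constVF]

lemma fmap_e1 : fmap (constVF 1) = yddy := by
  simp [fmap, constVF]

lemma fmap_x : fmap xddx = 0 := by
  simp [fmap, xddx, yddy]

lemma fmap_y : fmap yddy = 0 := by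
  simp [fmap, xddx, yddy]

/-- The bracket as a bilinear map. -/
noncomputable def VB : PVF 2 →ₗ[ℝ] PVF 2 →ₗ[ℝ] PVF 2 :=
  LinearMap.mk₂ ℝ vbracket
    (fun X X' Y => by
      funext j
      simp only [vbracket, Pi.add_apply, map_add]
      rw [← Finset.sum_add_distrib]
      exact Finset.sum_congr rfl fun i _ => by ring)
    (fun c X Y => by
      funext j
      simp only [vbracket, Pi.smul_apply, map_smul, Finset.smul_sum, smul_eq_C_mul, map_mul,
        constantCoeff_C]
      exact Finset.sum_congr rfl fun i _ => by
        rw [pderiv_C_mul]; ring)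
    (fun X Y Y' => by
      funext j
      simp only [vbracket, Pi.add_apply, map_add]
      rw [← Finset.sum_add_distrib]
      exact Finset.sum_congr rfl fun i _ => by ring)
    (fun c X Y => by
      funext j
      simp only [vbracket, Pi.smul_apply, Finset.smul_sum]
      exact Finset.sum_congr rfl fun i _ => by
        simp only [smul_eq_C_mul, pderiv_C_mul]; ring)

lemma VB_apply (X Y : PVF 2) : VB X Y = vbracket X Y := rfl

theorem quasiderivation_example_not_derivation_not_qc :
    ∃ f : PVF 2 →ₗ[ℝ] PVF 2,
      f (constVF 0) = xddx ∧ f (constVF 1) = yddy ∧ f xddx = 0 ∧ f yddy = 0 ∧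
      (∀ X ∈ Pex, f X ∈ Pex) ∧
      (∀ X ∈ Pex, ∀ Y ∈ Pex, vbracket (f X) Y + vbracket X (f Y) = 0) ∧
      ¬ (∀ X ∈ Pex, ∀ Y ∈ Pex,
          f (vbracket X Y) = vbracket (f X) Y + vbracket X (f Y)) ∧
      ¬ (∀ X ∈ Pex, ∀ Y ∈ Pex, vbracket (f X) Y = vbracket X (f Y)) := by
  have hx : xddx ∈ Pex := Submodule.subset_span (by simp)
  have hy : yddy ∈ Pex := Submodule.subset_span (by simp)
  have he0 : constVF 0 ∈ Pex := Submodule.subset_span (by simp)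
  have he1 : constVF 1 ∈ Pex := Submodule.subset_span (by simp)
  -- the combined bilinear map  (X, Y) ↦ [f X, Y] + [X, f Y]
  set T : PVF 2 →ₗ[ℝ] PVF 2 →ₗ[ℝ] PVF 2 :=
    VB.comp fmap + (VB.flip.comp fmap).flip with hT
  have hTapp : ∀ X Y, T X Y = vbracket (fmap X) Y + vbracket X (fmap Y) := by
    intro X Y; rfl
  -- all concrete brackets
  have key : ∀ X ∈ Pex, ∀ Y ∈ Pex, T X Y = 0 := by
    intro X hX
    induction hX using Submodule.span_induction with
    | mem x h =>
      intro Y hY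
      induction hY using Submodule.span_induction with
      | mem y h' =>
        rw [hTapp]
        rcases h with h | h | h | h <;> rcases h' with h' | h' | h' | h' <;>
          subst h <;> subst h' <;>
          simp only [fmap_e0, fmap_e1, fmap_x, fmap_y] <;>
          funext j <;> fin_cases j <;>
          simp [vbracket, xddx, yddy, constVF, Fin.sum_univ_two, pderiv_X, Pi.single_apply]
      | zero => simp
      | add y z _ _ hy' hz' => rw [map_add, hy', hz', add_zero]
      | smul c y _ hy' => rw [map_smul, hy', smul_zero]
    | zero => intro Y hY; simp
    | add x z _ _ hx' hz' => intro Y hY; rw [map_add, LinearMap.add_apply, hx' Y hY, hz' Y hY, add_zero]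
    | smul c x _ hx' => intro Y hY; rw [map_smul, LinearMap.smul_apply, hx' Y hY, smul_zero]
  refine ⟨fmap, fmap_e0, fmap_e1, fmap_x, fmap_y, ?_, ?_, ?_, ?_⟩
  · intro X _
    exact Submodule.add_mem _ (Submodule.smul_mem _ _ hx) (Submodule.smul_mem _ _ hy)
  · intro X hX Y hY
    have := key X hX Y hY
    rwa [hTapp] at this
  · intro h
    have h1 := h (constVF 0) he0 xddx hx
    have hbr : vbracket (constVF 0) xddx = constVF 0 := by
      funext j; fin_cases j <;>
        simp [vbracket, xddx, constVF, Fin.sum_univ_two, pderiv_X, Pi.single_apply]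
    rw [hbr, fmap_e0, fmap_x] at h1
    have h2 : vbracket xddx xddx + vbracket (constVF 0) 0 = 0 := by
      funext j; fin_cases j <;>
        simp [vbracket, xddx, constVF, Fin.sum_univ_two, pderiv_X, Pi.single_apply]
    rw [h2] at h1
    have : xddx 0 = (0 : PVF 2) 0 := by rw [h1]
    simp [xddx] at this
  · intro h
    have h1 := h (constVF 0) he0 (constVF 0) he0
    rw [fmap_e0] at h1
    have ha : vbracket xddx (constVF 0) 0 = -1 := by
      simp [vbracket, xddx, constVF, Fin.sum_univ_two, pderiv_X, Pi.single_apply]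
    have hb : vbracket (constVF 0) xddx 0 = 1 := by
      simp [vbracket, xddx, constVF, Fin.sum_univ_two, pderiv_X, Pi.single_apply]
    have : (-1 : MvPolynomial (Fin 2) ℝ) = 1 := by rw [← ha, ← hb, h1]
    norm_num at this
end

section
/- Let 𝔓 be a Lie algebra of polynomial vector fields on ℝ^n (n ≥ 2) containing all constant fields and the Euler field E, and suppose (f,f,g) ∈ QDer₀(𝔓) (f, g homogeneous of degree 0) with f(E) = 0, f restricted to 𝔓_{−1} zero, and g vanishing on [𝔓₁, 𝔓_{−1}]. Then f ≡ 0, g vanishes on 𝔓_i for all i ≠ 0 and on [𝔓₀, 𝔓₀], while g is unconstrained on any complement of 𝔓₀ ∩ [𝔓,𝔓] in 𝔓₀. -/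
open MvPolynomial

section Aux
variable {n : ℕ}

lemma pderiv_constVF (i k j : Fin n) : pderiv i (constVF k j) = 0 := by
  unfold constVF; split <;> simp

lemma vbracket_zero_right (X : PVF n) : vbracket X 0 = 0 := by
  funext j; simp [vbracket]

lemma vbracket_zero_left (Y : PVF n) : vbracket 0 Y = 0 := by
  funext j; simp [vbracket]

lemma vbracket_antisymm (X Y : PVF n) : vbracket X Y = - vbracket Y X := by
  funext j
  simp only [vbracket, Pi.neg_apply, ← Finset.sum_neg_distrib]
  exact Finset.sum_congr rfl fun i _ => by ring

lemma vbracket_const (k : Fin n) (Y : PVF n) :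
    vbracket (constVF k) Y = fun j => pderiv k (Y j) := by
  funext j
  simp only [vbracket, pderiv_constVF, mul_zero, sub_zero]
  rw [Finset.sum_eq_single k]
  · simp [constVF]
  · intro i _ hik; simp [constVF, if_neg hik]
  · simp

lemma degree_eq_sum_univ (s : Fin n →₀ ℕ) : s.degree = ∑ i : Fin n, s i := by
  rw [Finsupp.degree]
  exact Finset.sum_subset (Finset.subset_univ _) (by
    intro i _ hi
    simpa using Finsupp.notMem_support_iff.mp hi)

lemma X_mul_pderiv_monomial (i : Fin n) (s : Fin n →₀ ℕ) (a : ℝ) :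
    MvPolynomial.X i * pderiv i (monomial s a) = (s i) • monomial s a := by
  rw [pderiv_monomial]
  rcases Nat.eq_zero_or_pos (s i) with h | h
  · simp [h]
  · have hs : Finsupp.single i 1 + (s - Finsupp.single i 1) = s := by
      ext j
      rcases eq_or_ne j i with rfl | hj
      · simp [Finsupp.single_apply]; omega
      · simp [Finsupp.single_apply, Ne.symm hj]
    rw [X, monomial_mul, hs, smul_monomial]
    congr 1
    simp [nsmul_eq_mul]; ring

lemma euler_identity {d : ℕ} {p : MvPolynomial (Fin n) ℝ} (hp : p.IsHomogeneous d) :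
    ∑ i : Fin n, MvPolynomial.X i * pderiv i p = d • p := by
  conv_lhs => rw [p.as_sum]
  have : ∀ i : Fin n, MvPolynomial.X i * pderiv i (∑ v ∈ p.support, monomial v (coeff v p))
      = ∑ v ∈ p.support, (v i) • monomial v (coeff v p) := by
    intro i
    rw [map_sum, Finset.mul_sum]
    exact Finset.sum_congr rfl fun v _ => X_mul_pderiv_monomial i v _
  rw [Finset.sum_congr rfl fun i _ => this i, Finset.sum_comm]
  conv_rhs => rw [p.as_sum, Finset.smul_sum]
  refine Finset.sum_congr rfl fun v hv => ?_
  rw [← Finset.sum_smul]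
  congr 1
  rw [← degree_eq_sum_univ]
  by_contra hne
  exact (mem_support_iff.mp hv) (hp.coeff_eq_zero hne)

lemma isHomogeneous_pderiv {d : ℕ} {p : MvPolynomial (Fin n) ℝ} (k : Fin n)
    (hp : p.IsHomogeneous (d + 1)) : (pderiv k p).IsHomogeneous d := by
  conv_lhs => rw [p.as_sum]
  rw [map_sum]
  apply IsHomogeneous.sum
  intro v hv
  rw [pderiv_monomial]
  rcases Nat.eq_zero_or_pos (v k) with h | h
  · simp [h]
    exact isHomogeneous_zero _ _ _
  · apply isHomogeneous_monomial
    have hd : v.degree = d + 1 := by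
      by_contra hne
      exact (mem_support_iff.mp hv) (hp.coeff_eq_zero hne)
    rw [degree_eq_sum_univ] at hd ⊢
    have : ∀ j : Fin n, ((v - Finsupp.single k 1 : Fin n →₀ ℕ)) j = if j = k then v k - 1 else v j := by
      intro j
      rcases eq_or_ne j k with rfl | hj
      · simp [Finsupp.single_apply]
      · simp [Finsupp.single_apply, Ne.symm hj, hj]
    rw [Finset.sum_congr rfl fun j _ => this j]
    have h1 := Finset.sum_eq_sum_sdiff_singleton_add (Finset.mem_univ k)
      (fun j => if j = k then v k - 1 else v j)
    have h2 := Finset.sum_eq_sum_sdiff_singleton_add (Finset.mem_univ k) (fun j => v j)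
    have h3 : ∑ j ∈ Finset.univ \ {k}, (if j = k then v k - 1 else v j)
        = ∑ j ∈ Finset.univ \ {k}, v j := by
      refine Finset.sum_congr rfl fun j hj => ?_
      rw [if_neg (by simpa using (Finset.mem_sdiff.mp hj).2)]
    rw [h3, if_pos rfl] at h1
    omega

lemma vbracket_euler_apply (Y : PVF n) (j : Fin n) :
    vbracket (eulerVF n) Y j = (∑ i : Fin n, MvPolynomial.X i * pderiv i (Y j)) - Y j := by
  simp only [vbracket, eulerVF]
  rw [Finset.sum_sub_distrib]
  congr 1
  rw [Finset.sum_eq_single j]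
  · simp
  · intro i _ hij; rw [pderiv_X_of_ne (Ne.symm hij), mul_zero]
  · simp

lemma isHomog_constVF (k : Fin n) : IsHomog (-1) (constVF k) := by
  left
  exact ⟨0, by norm_num, fun j => by
    unfold constVF; split
    · exact isHomogeneous_one _ _
    · exact isHomogeneous_zero _ _ _⟩

lemma vbracket_euler_homog {i : ℤ} {Z : PVF n} (h : IsHomog i Z) :
    vbracket (eulerVF n) Z = (i : ℝ) • Z := by
  rcases h with ⟨d, hd, hh⟩ | rfl
  · funext j
    rw [vbracket_euler_apply, euler_identity (hh j), Pi.smul_apply]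
    have : (d : ℝ) = (i : ℝ) + 1 := by exact_mod_cast congrArg (Int.cast : ℤ → ℝ) hd
    rw [← Nat.cast_smul_eq_nsmul ℝ, this]
    module
  · rw [vbracket_zero_right]; simp

noncomputable def compVF (d : ℕ) (X : PVF n) : PVF n :=
  fun j => homogeneousComponent d (X j)

lemma isHomog_compVF (d : ℕ) (X : PVF n) : IsHomog ((d : ℤ) - 1) (compVF d X) :=
  Or.inl ⟨d, by ring, fun j => homogeneousComponent_isHomogeneous d (X j)⟩

lemma compVF_decomp {N : ℕ} {X : PVF n} (h : ∀ j, (X j).totalDegree ≤ N) :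
    X = ∑ d ∈ Finset.range (N + 1), compVF d X := by
  funext j
  rw [Finset.sum_apply]
  have hs := sum_homogeneousComponent (X j)
  rw [← hs]
  simp only [compVF]
  refine Finset.sum_subset (by
      intro d hd
      have := h j
      simp only [Finset.mem_range] at *
      omega)
    (fun d _ hd => homogeneousComponent_eq_zero _ _ (by
      simp only [Finset.mem_range, not_lt] at hd
      omega))

lemma compVF_compVF (e d : ℕ) (X : PVF n) :
    compVF e (compVF d X) = if e = d then compVF d X else 0 := by
  funext j
  have hm : homogeneousComponent d (X j) ∈ homogeneousSubmodule (Fin n) ℝ d :=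
    (mem_homogeneousSubmodule _ _).mpr (homogeneousComponent_isHomogeneous d (X j))
  simp only [compVF, homogeneousComponent_of_mem hm]
  split <;> rfl

lemma compVF_smul (d : ℕ) (c : ℝ) (X : PVF n) : compVF d (c • X) = c • compVF d X := by
  funext j; simp [compVF]

lemma compVF_sum {ι : Type*} (d : ℕ) (s : Finset ι) (F : ι → PVF n) :
    compVF d (∑ x ∈ s, F x) = ∑ x ∈ s, compVF d (F x) := by
  funext j; simp [compVF]

lemma comp_mem (P : Submodule ℝ (PVF n)) (hE : ∀ X ∈ P, vbracket (eulerVF n) X ∈ P) :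
    ∀ N : ℕ, ∀ X ∈ P, (∀ j, (X j).totalDegree ≤ N) → ∀ d, compVF d X ∈ P := by
  intro N
  induction N with
  | zero =>
    intro X hX h d
    have hdec := compVF_decomp (N := 0) h
    rw [Finset.sum_range_one] at hdec
    rcases d with _ | d
    · rw [← hdec]; exact hX
    · have : compVF (d + 1) X = 0 := by
        funext j
        exact homogeneousComponent_eq_zero _ _ (lt_of_le_of_lt (h j) (Nat.succ_pos d))
      rw [this]; exact P.zero_mem
  | succ N ih =>
    intro X hX h d
    have hdec := compVF_decomp h
    set X' : PVF n := vbracket (eulerVF n) X - (N : ℝ) • X with hX'def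
    have hX'P : X' ∈ P := P.sub_mem (hE X hX) (P.smul_mem _ hX)
    have hX' : X' = ∑ e ∈ Finset.range (N + 1), (((e : ℝ) - (N + 1))) • compVF e X := by
      funext j
      have hXj : X j = ∑ e ∈ Finset.range (N + 2), homogeneousComponent e (X j) := by
        have := congrFun hdec j
        rw [Finset.sum_apply] at this
        exact this
      have hbrj : vbracket (eulerVF n) X j
          = ∑ e ∈ Finset.range (N + 2), ((e : ℝ) - 1) • homogeneousComponent e (X j) := by
        rw [vbracket_euler_apply]
        conv_lhs => rw [hXj]
        calc (∑ i : Fin n, MvPolynomial.X i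
              * pderiv i (∑ e ∈ Finset.range (N + 2), homogeneousComponent e (X j)))
              - ∑ e ∈ Finset.range (N + 2), homogeneousComponent e (X j)
            = (∑ e ∈ Finset.range (N + 2), ∑ i : Fin n,
                MvPolynomial.X i * pderiv i (homogeneousComponent e (X j)))
              - ∑ e ∈ Finset.range (N + 2), homogeneousComponent e (X j) := by
              congr 1
              rw [Finset.sum_congr rfl fun (i : Fin n) (_ : i ∈ Finset.univ) => by
                rw [map_sum, Finset.mul_sum]]
              exact Finset.sum_comm
          _ = (∑ e ∈ Finset.range (N + 2), (e : ℕ) • homogeneousComponent e (X j))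
              - ∑ e ∈ Finset.range (N + 2), homogeneousComponent e (X j) := by
              congr 1
              exact Finset.sum_congr rfl fun e _ =>
                euler_identity (homogeneousComponent_isHomogeneous e (X j))
          _ = ∑ e ∈ Finset.range (N + 2), ((e : ℝ) - 1) • homogeneousComponent e (X j) := by
              rw [← Finset.sum_sub_distrib]
              refine Finset.sum_congr rfl fun e _ => ?_
              rw [← Nat.cast_smul_eq_nsmul ℝ]
              module
      have : X' j = ∑ e ∈ Finset.range (N + 2),
          (((e : ℝ) - 1 - N)) • homogeneousComponent e (X j) := by
        have hXj' : ((N : ℝ) • X) j = ∑ e ∈ Finset.range (N + 2),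
            (N : ℝ) • homogeneousComponent e (X j) := by
          rw [Pi.smul_apply]
          conv_lhs => rw [hXj]
          rw [Finset.smul_sum]
        rw [hX'def, Pi.sub_apply, hbrj, hXj', ← Finset.sum_sub_distrib]
        refine Finset.sum_congr rfl fun e _ => ?_
        module
      rw [Finset.sum_apply, this, Finset.sum_range_succ]
      have hz : (((N + 1 : ℕ) : ℝ) - 1 - N) = 0 := by push_cast; ring
      rw [hz, zero_smul, add_zero]
      refine Finset.sum_congr rfl fun e he => ?_
      rw [Pi.smul_apply]
      have : ((e : ℝ) - 1 - N) = ((e : ℝ) - (N + 1)) := by ring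
      rw [this]
      rfl
    have hbound' : ∀ j, (X' j).totalDegree ≤ N := by
      intro j
      rw [hX', Finset.sum_apply]
      refine totalDegree_finsetSum_le fun e he => ?_
      have hh : (((e : ℝ) - (N + 1)) • compVF e X) j |>.IsHomogeneous e := by
        rw [Pi.smul_apply, smul_eq_C_mul]
        exact (homogeneousComponent_isHomogeneous e (X j)).C_mul _
      exact hh.totalDegree_le.trans (by
        simp only [Finset.mem_range] at he; omega)
    have hcomp' : ∀ e, compVF e X' ∈ P := ih X' hX'P hbound'
    have hcompeq : ∀ e, e ≤ N → compVF e X' = ((e : ℝ) - (N + 1)) • compVF e X := by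
      intro e he
      rw [hX', compVF_sum]
      rw [Finset.sum_congr rfl fun d _ => compVF_smul e _ _]
      rw [Finset.sum_congr rfl fun d (_ : d ∈ Finset.range (N+1)) => by
        rw [compVF_compVF, smul_ite, smul_zero]]
      rw [Finset.sum_ite_eq (Finset.range (N + 1)) e]
      rw [if_pos (Finset.mem_range.mpr (by omega))]
    have hle : ∀ e, e ≤ N → compVF e X ∈ P := by
      intro e he
      have hc0 : ((e : ℝ) - (N + 1)) ≠ 0 := by
        have : (e : ℝ) < (N : ℝ) + 1 := by exact_mod_cast Nat.lt_succ_of_le he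
        intro hcon; rw [sub_eq_zero] at hcon; rw [hcon] at this; exact lt_irrefl _ this
      have : compVF e X = ((e : ℝ) - (N + 1))⁻¹ • compVF e X' := by
        rw [hcompeq e he, inv_smul_smul₀ hc0]
      rw [this]
      exact P.smul_mem _ (hcomp' e)
    rcases Nat.lt_or_ge d (N + 1) with hd | hd
    · exact hle d (by omega)
    rcases Nat.eq_or_lt_of_le hd with hd1 | hd2
    · subst hd1
      rw [Finset.sum_range_succ] at hdec
      have : compVF (N + 1) X = X - ∑ e ∈ Finset.range (N + 1), compVF e X := by
        rw [eq_sub_iff_add_eq, add_comm]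
        exact hdec.symm
      rw [this]
      exact P.sub_mem hX (Submodule.sum_mem P fun e he =>
        hle e (by simp only [Finset.mem_range] at he; omega))
    · have : compVF d X = 0 := by
        funext j
        exact homogeneousComponent_eq_zero _ _ (lt_of_le_of_lt (h j) (by omega))
      rw [this]; exact P.zero_mem

end Aux

theorem qder0_vanishing_lemma (n : ℕ) (hn : 2 ≤ n) (P : Submodule ℝ (PVF n))
    (hE : eulerVF n ∈ P)
    (hconst : ∀ i : Fin n, constVF i ∈ P)
    (hbr : ∀ X ∈ P, ∀ Y ∈ P, vbracket X Y ∈ P)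
    (f g : PVF n →ₗ[ℝ] PVF n)
    (hfP : ∀ X ∈ P, f X ∈ P) (hgP : ∀ X ∈ P, g X ∈ P)
    (hf0 : ∀ i : ℤ, ∀ X ∈ P, IsHomog i X → IsHomog i (f X))
    (hg0 : ∀ i : ℤ, ∀ X ∈ P, IsHomog i X → IsHomog i (g X))
    (hqd : ∀ X ∈ P, ∀ Y ∈ P, vbracket (f X) Y + vbracket X (f Y) = g (vbracket X Y))
    (hfE : f (eulerVF n) = 0)
    (hfm1 : ∀ X ∈ P, IsHomog (-1) X → f X = 0)
    (hg11 : ∀ X ∈ P, ∀ Y ∈ P, IsHomog 1 X → IsHomog (-1) Y → g (vbracket X Y) = 0) :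
    (∀ X ∈ P, f X = 0) ∧
    (∀ i : ℤ, i ≠ 0 → ∀ X ∈ P, IsHomog i X → g X = 0) ∧
    (∀ X ∈ P, ∀ Y ∈ P, IsHomog 0 X → IsHomog 0 Y → g (vbracket X Y) = 0) ∧
    (∀ k : PVF n →ₗ[ℝ] PVF n,
      (∀ i : ℤ, i ≠ 0 → ∀ X ∈ P, IsHomog i X → k X = 0) →
      (∀ X ∈ P, ∀ Y ∈ P, k (vbracket X Y) = 0) →
      ∀ X ∈ P, ∀ Y ∈ P,
        vbracket (f X) Y + vbracket X (f Y) = g (vbracket X Y) + k (vbracket X Y)) := by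
  have hcomp : ∀ X ∈ P, ∀ d : ℕ, compVF d X ∈ P := fun X hX d =>
    comp_mem P (fun Z hZ => hbr _ hE _ hZ) (Finset.univ.sup fun j => (X j).totalDegree) X hX
      (fun j => Finset.le_sup (f := fun j => (X j).totalDegree) (Finset.mem_univ j)) d
  have hfg : ∀ (i : ℤ), i ≠ 0 → ∀ Z ∈ P, IsHomog i Z → f Z = g Z := by
    intro i hi Z hZ hh
    have h1 := hqd _ hE Z hZ
    rw [hfE, vbracket_zero_left, zero_add, vbracket_euler_homog hh, map_smul,
      vbracket_euler_homog (hf0 i Z hZ hh)] at h1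
    have hi' : (i : ℝ) ≠ 0 := Int.cast_ne_zero.mpr hi
    have h2 := congrArg (fun W : PVF n => ((i : ℝ))⁻¹ • W) h1
    simpa [inv_smul_smul₀ hi'] using h2
  have hfhom : ∀ d : ℕ, ∀ Z ∈ P, (∀ k, (Z k).IsHomogeneous d) → f Z = 0 := by
    intro d
    induction d using Nat.strong_induction_on with
    | _ d ih =>
      intro Z hZ hh
      rcases d with _ | d'
      · exact hfm1 Z hZ (Or.inl ⟨0, by norm_num, hh⟩)
      · have hIZ : IsHomog (d' : ℤ) Z := Or.inl ⟨d' + 1, by push_cast; ring, hh⟩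
        have hfZhom := hf0 _ Z hZ hIZ
        have hker : ∀ k : Fin n, vbracket (constVF k) (f Z) = 0 := by
          intro k
          have h1 := hqd (constVF k) (hconst k) Z hZ
          rw [hfm1 _ (hconst k) (isHomog_constVF k), vbracket_zero_left, zero_add] at h1
          have hWP : vbracket (constVF k) Z ∈ P := hbr _ (hconst k) _ hZ
          have hWh : ∀ j, ((vbracket (constVF k) Z) j).IsHomogeneous d' := by
            intro j
            rw [vbracket_const]
            exact isHomogeneous_pderiv k (hh j)
          have hgW : g (vbracket (constVF k) Z) = 0 := by
            rcases Nat.lt_or_ge d' 2 with hd2 | hd2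
            · interval_cases d'
              · have hW1 : IsHomog (-1) (vbracket (constVF k) Z) :=
                  Or.inl ⟨0, by norm_num, hWh⟩
                rw [← hfg (-1) (by norm_num) _ hWP hW1]
                exact hfm1 _ hWP hW1
              · rw [vbracket_antisymm, map_neg,
                  hg11 Z hZ (constVF k) (hconst k)
                    (Or.inl ⟨2, by norm_num, hh⟩) (isHomog_constVF k), neg_zero]
            · have hWI : IsHomog ((d' : ℤ) - 1) (vbracket (constVF k) Z) :=
                Or.inl ⟨d', by ring, hWh⟩
              rw [← hfg _ (by omega) _ hWP hWI]
              exact ih d' (by omega) _ hWP hWh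
          exact h1.trans hgW
        rcases hfZhom with ⟨e, he, hfh⟩ | h0
        · have he' : e = d' + 1 := by exact_mod_cast he
          funext j
          have hp : ∀ i : Fin n, pderiv i ((f Z) j) = 0 := by
            intro i
            have h2 := hker i
            rw [vbracket_const] at h2
            simpa using congrFun h2 j
          have heu := euler_identity (hfh j)
          rw [Finset.sum_congr rfl (fun i (_ : i ∈ Finset.univ) => by
            rw [hp i, mul_zero])] at heu
          rw [Finset.sum_const_zero] at heu
          have hsz : ((e : ℝ)) • (f Z) j = 0 := by
            rw [Nat.cast_smul_eq_nsmul]; exact heu.symm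
          have hene : (e : ℝ) ≠ 0 := by
            rw [he']; push_cast; positivity
          have := congrArg (fun q => ((e : ℝ))⁻¹ • q) hsz
          simpa [inv_smul_smul₀ hene] using this
        · exact h0
  have hf_all : ∀ X ∈ P, f X = 0 := by
    intro X hX
    have hdec : X = ∑ d ∈ Finset.range ((Finset.univ.sup fun j => (X j).totalDegree) + 1),
        compVF d X :=
      compVF_decomp (fun j => Finset.le_sup (f := fun j => (X j).totalDegree) (Finset.mem_univ j))
    rw [hdec, map_sum]
    exact Finset.sum_eq_zero fun d _ =>
      hfhom d _ (hcomp X hX d) (fun j => homogeneousComponent_isHomogeneous d (X j))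
  refine ⟨hf_all, ?_, ?_, ?_⟩
  · intro i hi X hX hh
    rw [← hfg i hi X hX hh]
    exact hf_all X hX
  · intro X hX Y hY _ _
    have h1 := hqd X hX Y hY
    rw [hf_all X hX, hf_all Y hY, vbracket_zero_left, vbracket_zero_right, add_zero] at h1
    exact h1.symm
  · intro k hk1 hk2 X hX Y hY
    rw [hk2 X hX Y hY, add_zero]
    exact hqd X hX Y hY
end
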